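/- arXiv:1702.01135 — 6 statements merged into one kernel-verified Lean document; each statement's English description precedes it below -/
import Mathlib

section
/- Let D be a derivation in the Reluplex calculus starting from a derivation tree D_0 consisting of a single node s_0 = ⟨B_0, T_0, l_0, u_0, α_0, R_0⟩ (with α_0 ≡ 0). Then for every derivation tree D_i appearing in D and every non-distinguished node s = ⟨B, T, l, u, α, R⟩ appearing in D_i: (i) a real-valued assignment of the variables satisfies all equations of T_0 if and only if it satisfies all equations of T; and (ii) the assignment α of node s satisfies all equations of T. -/
open scoped Classical

/-- A (non-distinguished) Reluplex configuration over the variable set `V`: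
basic variables, tableau coefficients, lower/upper bounds (possibly infinite),
current assignment, and the set of ReLU pairs. -/
structure Config (V : Type*) where
  basic : Finset V
  T : V → V → ℝ
  l : V → EReal
  u : V → EReal
  α : V → ℝ
  R : Finset (V × V)

namespace Config

variable {V : Type*} [Fintype V] [DecidableEq V]

/-- The right-hand side `Σ_{j ∉ basic} T i j * β j` of the tableau row of `i`. -/
noncomputable def rowSum (c : Config V) (i : V) (β : V → ℝ) : ℝ :=
  ∑ j ∈ Finset.univ.filter (fun j => j ∉ c.basic), c.T i j * β j

/-- An assignment `β` satisfies all equations of the tableau of `c`. -/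
def SatTab (c : Config V) (β : V → ℝ) : Prop :=
  ∀ i ∈ c.basic, β i = c.rowSum i β

/-- An assignment `β` respects all the lower and upper bounds of `c`. -/
def InBounds (c : Config V) (β : V → ℝ) : Prop :=
  ∀ x, c.l x ≤ (β x : EReal) ∧ (β x : EReal) ≤ c.u x

/-- `slack⁺(x_i)`. -/
def slackPos (c : Config V) (i : V) : Set V :=
  { j | j ∉ c.basic ∧
      ((0 < c.T i j ∧ (c.α j : EReal) < c.u j) ∨ (c.T i j < 0 ∧ c.l j < (c.α j : EReal))) }

/-- `slack⁻(x_i)`. -/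
def slackNeg (c : Config V) (i : V) : Set V :=
  { j | j ∉ c.basic ∧
      ((c.T i j < 0 ∧ (c.α j : EReal) < c.u j) ∨ (0 < c.T i j ∧ c.l j < (c.α j : EReal))) }

/-- The `pivot(T,i,j)` operation: `x_i` leaves the basis and `x_j` enters it;
the row of `x_i` is solved for `x_j`, and the result is substituted for `x_j`
in all other rows. -/
noncomputable def pivotConfig (c : Config V) (i j : V) : Config V :=
  { c with
    basic := insert j (c.basic.erase i)
    T := fun r k =>
      if r = j then (if k = i then 1 / c.T i j else - (c.T i k / c.T i j))
      else (if k = i then c.T r j / c.T i j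
            else c.T r k - c.T r j * c.T i k / c.T i j) }

/-- The `update(α, x_j, δ)` operation for a non-basic variable `x_j`. -/
noncomputable def updateConfig (c : Config V) (j : V) (δ : ℝ) : Config V :=
  { c with
    α := fun k =>
      if k = j then c.α k + δ
      else if k ∈ c.basic then c.α k + δ * c.T k j
      else c.α k }

/-- The candidate tighter lower bound `Σ_{T i j>0} T i j * l j + Σ_{T i j<0} T i j * u j`. -/
noncomputable def derivedLower (c : Config V) (i : V) : EReal :=
  (∑ j ∈ Finset.univ.filter (fun j => j ∉ c.basic ∧ 0 < c.T i j),
      (c.T i j : EReal) * c.l j)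
  + ∑ j ∈ Finset.univ.filter (fun j => j ∉ c.basic ∧ c.T i j < 0),
      (c.T i j : EReal) * c.u j

/-- The candidate tighter upper bound `Σ_{T i j>0} T i j * u j + Σ_{T i j<0} T i j * l j`. -/
noncomputable def derivedUpper (c : Config V) (i : V) : EReal :=
  (∑ j ∈ Finset.univ.filter (fun j => j ∉ c.basic ∧ 0 < c.T i j),
      (c.T i j : EReal) * c.u j)
  + ∑ j ∈ Finset.univ.filter (fun j => j ∉ c.basic ∧ c.T i j < 0),
      (c.T i j : EReal) * c.l j

end Config

/-- A Reluplex configuration: either one of the distinguished symbols `SAT`, `UNSAT`,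
or a tuple `⟨B, T, l, u, α, R⟩`. -/
inductive RConfig (V : Type*) where
  | SAT : RConfig V
  | UNSAT : RConfig V
  | node : Config V → RConfig V

/-- One application of a Reluplex derivation rule to the configuration `c`,
producing the given list of child configurations. -/
inductive Step {V : Type*} [Fintype V] [DecidableEq V] :
    Config V → List (RConfig V) → Prop
  | pivot1 (c : Config V) (i j : V) (hi : i ∈ c.basic)
      (hlo : (c.α i : EReal) < c.l i) (hj : j ∈ c.slackPos i) :
      Step c [RConfig.node (c.pivotConfig i j)]
  | pivot2 (c : Config V) (i j : V) (hi : i ∈ c.basic)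
      (hhi : c.u i < (c.α i : EReal)) (hj : j ∈ c.slackNeg i) :
      Step c [RConfig.node (c.pivotConfig i j)]
  | update (c : Config V) (j : V) (δ : ℝ) (hj : j ∉ c.basic)
      (hviol : (c.α j : EReal) < c.l j ∨ c.u j < (c.α j : EReal))
      (hlo : c.l j ≤ ((c.α j + δ : ℝ) : EReal))
      (hhi : ((c.α j + δ : ℝ) : EReal) ≤ c.u j) :
      Step c [RConfig.node (c.updateConfig j δ)]
  | failure (c : Config V) (i : V) (hi : i ∈ c.basic)
      (h : ((c.α i : EReal) < c.l i ∧ c.slackPos i = ∅) ∨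
           (c.u i < (c.α i : EReal) ∧ c.slackNeg i = ∅)) :
      Step c [RConfig.UNSAT]
  | updateB (c : Config V) (i j : V) (hR : (i, j) ∈ c.R) (hi : i ∉ c.basic)
      (hne : c.α j ≠ max 0 (c.α i)) (hpos : 0 ≤ c.α j) :
      Step c [RConfig.node (c.updateConfig i (c.α j - c.α i))]
  | updateF (c : Config V) (i j : V) (hR : (i, j) ∈ c.R) (hj : j ∉ c.basic)
      (hne : c.α j ≠ max 0 (c.α i)) :
      Step c [RConfig.node (c.updateConfig j (max 0 (c.α i) - c.α j))]
  | pivotForRelu (c : Config V) (i j : V) (hi : i ∈ c.basic)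
      (hrel : ∃ x, (i, x) ∈ c.R ∨ (x, i) ∈ c.R) (hj : j ∉ c.basic)
      (hT : c.T i j ≠ 0) :
      Step c [RConfig.node (c.pivotConfig i j)]
  | reluSplit (c : Config V) (i j : V) (hR : (i, j) ∈ c.R)
      (hl : c.l i < 0) (hu : 0 < c.u i) :
      Step c [RConfig.node { c with u := fun k => if k = i then 0 else c.u k },
              RConfig.node { c with l := fun k => if k = i then 0 else c.l k }]
  | reluSuccess (c : Config V) (hb : c.InBounds c.α)
      (hr : ∀ p ∈ c.R, c.α p.2 = max 0 (c.α p.1)) :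
      Step c [RConfig.SAT]
  | deriveLowerBound (c : Config V) (i : V) (hi : i ∈ c.basic)
      (h : c.l i < c.derivedLower i) :
      Step c [RConfig.node { c with l := fun k => if k = i then c.derivedLower i else c.l k }]
  | deriveUpperBound (c : Config V) (i : V) (hi : i ∈ c.basic)
      (h : c.derivedUpper i < c.u i) :
      Step c [RConfig.node { c with u := fun k => if k = i then c.derivedUpper i else c.u k }]

/-- Derivation trees: trees of Reluplex configurations. -/
inductive DTree (V : Type*) where
  | leaf : RConfig V → DTree V
  | node : RConfig V → List (DTree V) → DTree V

namespace DTree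

variable {V : Type*}

/-- The configuration at the root of a derivation tree. -/
def root : DTree V → RConfig V
  | DTree.leaf s => s
  | DTree.node s _ => s

/-- `Mem s t`: the configuration `s` appears (as some node) in the tree `t`. -/
inductive Mem : RConfig V → DTree V → Prop
  | leaf (s : RConfig V) : Mem s (DTree.leaf s)
  | root (s : RConfig V) (ts : List (DTree V)) : Mem s (DTree.node s ts)
  | child {s s' : RConfig V} {t : DTree V} {ts : List (DTree V)}
      (h : Mem s t) (ht : t ∈ ts) : Mem s (DTree.node s' ts)

/-- `LeafMem s t`: the configuration `s` appears as a leaf of the tree `t`. -/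
inductive LeafMem : RConfig V → DTree V → Prop
  | leaf (s : RConfig V) : LeafMem s (DTree.leaf s)
  | child {s s' : RConfig V} {t : DTree V} {ts : List (DTree V)}
      (h : LeafMem s t) (ht : t ∈ ts) : LeafMem s (DTree.node s' ts)

/-- `Sub t t'`: `t` is a subtree of `t'`. -/
inductive Sub : DTree V → DTree V → Prop
  | refl (t : DTree V) : Sub t t
  | child {t t' : DTree V} {s : RConfig V} {ts : List (DTree V)}
      (h : Sub t t') (ht : t' ∈ ts) : Sub t (DTree.node s ts)

end DTree

/-- `Expand D D'`: `D'` is obtained from `D` by applying exactly one derivation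
rule to one of the leaves of `D`. -/
inductive Expand {V : Type*} [Fintype V] [DecidableEq V] : DTree V → DTree V → Prop
  | here {c : Config V} {ts : List (RConfig V)} (h : Step c ts) :
      Expand (DTree.leaf (RConfig.node c)) (DTree.node (RConfig.node c) (ts.map DTree.leaf))
  | child {s : RConfig V} {pre post : List (DTree V)} {t t' : DTree V}
      (h : Expand t t') :
      Expand (DTree.node s (pre ++ t :: post)) (DTree.node s (pre ++ t' :: post))

/-- `IsDerivation s0 m D`: `D 0, D 1, …, D m` is a Reluplex derivation starting
from the derivation tree consisting of the single node `s0`. -/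
def IsDerivation {V : Type*} [Fintype V] [DecidableEq V]
    (s0 : Config V) (m : ℕ) (D : ℕ → DTree V) : Prop :=
  D 0 = DTree.leaf (RConfig.node s0) ∧ ∀ i < m, Expand (D i) (D (i + 1))

/-!
Every rule either pivots on a non-zero coefficient, updates a non-basic variable (moving the
basic ones along the tableau), or leaves the tableau and the assignment untouched. A pivot only
rewrites the equations equivalently, and an update keeps the assignment a solution. Since
`α₀ ≡ 0` solves the initial tableau, induction along the derivation shows that every node keeps
the solution set of the initial tableau and an assignment solving it.
-/

namespace Config

variable {V : Type*}

lemma notMem_basic_and_T_ne_zero_of_mem_slackPos {c : Config V} {i j : V}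
    (h : j ∈ c.slackPos i) : j ∉ c.basic ∧ c.T i j ≠ 0 := by
  obtain ⟨hj, ⟨hT, -⟩ | ⟨hT, -⟩⟩ := h
  exacts [⟨hj, hT.ne'⟩, ⟨hj, hT.ne⟩]

lemma notMem_basic_and_T_ne_zero_of_mem_slackNeg {c : Config V} {i j : V}
    (h : j ∈ c.slackNeg i) : j ∉ c.basic ∧ c.T i j ≠ 0 := by
  obtain ⟨hj, ⟨hT, -⟩ | ⟨hT, -⟩⟩ := h
  exacts [⟨hj, hT.ne⟩, ⟨hj, hT.ne'⟩]

variable [Fintype V] [DecidableEq V]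

lemma satTab_congr {c c' : Config V} (hB : c.basic = c'.basic) (hT : c.T = c'.T) :
    c.SatTab = c'.SatTab := by
  obtain ⟨⟩ := c
  obtain ⟨⟩ := c'
  subst hB hT
  rfl

def nonbasic (c : Config V) : Finset V :=
  Finset.univ.filter (fun j => j ∉ c.basic)

@[simp] lemma mem_nonbasic {c : Config V} {j : V} : j ∈ c.nonbasic ↔ j ∉ c.basic := by
  simp [nonbasic]

lemma rowSum_eq_add_sum_erase (c : Config V) {j : V} (hj : j ∉ c.basic) (r : V) (β : V → ℝ) :
    c.rowSum r β = c.T r j * β j + ∑ k ∈ c.nonbasic.erase j, c.T r k * β k :=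
  (Finset.add_sum_erase _ _ (mem_nonbasic.2 hj)).symm

lemma nonbasic_pivotConfig (c : Config V) {i j : V} (hi : i ∈ c.basic) (hj : j ∉ c.basic) :
    (c.pivotConfig i j).nonbasic = insert i (c.nonbasic.erase j) := by
  have hij : i ≠ j := fun e => hj (e ▸ hi)
  ext k
  rcases eq_or_ne k i with rfl | hki
  · simp [pivotConfig, nonbasic, hi, hij]
  · simp [pivotConfig, nonbasic, hki]

/- The two pivot identities hold for every `β`; their correction terms vanish exactly when `β`
satisfies the old row of `x_i`. -/
lemma rowSum_pivotConfig_of_ne (c : Config V) {i j r : V} (hi : i ∈ c.basic) (hj : j ∉ c.basic)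
    (hT : c.T i j ≠ 0) (hr : r ≠ j) (β : V → ℝ) :
    (c.pivotConfig i j).rowSum r β
      = c.rowSum r β + c.T r j / c.T i j * (β i - c.rowSum i β) := by
  have hiN : i ∉ c.nonbasic.erase j := by simp [hi]
  have hrow : ∀ k ∈ c.nonbasic.erase j, (c.pivotConfig i j).T r k * β k
      = c.T r k * β k - c.T r j / c.T i j * (c.T i k * β k) := by
    intro k hk
    have hki : k ≠ i := by rintro rfl; exact hiN hk
    simp only [pivotConfig, if_neg hr, if_neg hki]
    ring
  rw [rowSum, ← nonbasic, c.nonbasic_pivotConfig hi hj, Finset.sum_insert hiN,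
    Finset.sum_congr rfl hrow, Finset.sum_sub_distrib, ← Finset.mul_sum,
    c.rowSum_eq_add_sum_erase hj r, c.rowSum_eq_add_sum_erase hj i]
  simp only [pivotConfig, if_neg hr, if_true]
  field_simp
  ring

lemma rowSum_pivotConfig_self (c : Config V) {i j : V} (hi : i ∈ c.basic) (hj : j ∉ c.basic)
    (hT : c.T i j ≠ 0) (β : V → ℝ) :
    (c.pivotConfig i j).rowSum j β = β j + (β i - c.rowSum i β) / c.T i j := by
  have hiN : i ∉ c.nonbasic.erase j := by simp [hi]
  have hrow : ∀ k ∈ c.nonbasic.erase j, (c.pivotConfig i j).T j k * β k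
      = -(c.T i k * β k) / c.T i j := by
    intro k hk
    have hki : k ≠ i := by rintro rfl; exact hiN hk
    simp only [pivotConfig, if_true, if_neg hki]
    ring
  rw [rowSum, ← nonbasic, c.nonbasic_pivotConfig hi hj, Finset.sum_insert hiN,
    Finset.sum_congr rfl hrow, ← Finset.sum_div, Finset.sum_neg_distrib,
    c.rowSum_eq_add_sum_erase hj i]
  simp only [pivotConfig, if_true]
  field_simp
  ring

theorem satTab_pivotConfig_iff (c : Config V) {i j : V} (hi : i ∈ c.basic) (hj : j ∉ c.basic)
    (hT : c.T i j ≠ 0) (β : V → ℝ) :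
    (c.pivotConfig i j).SatTab β ↔ c.SatTab β := by
  have hne : ∀ {r}, r ∈ c.basic → r ≠ j := fun hr e => hj (e ▸ hr)
  constructor
  · intro h
    have hβi : β i = c.rowSum i β := by
      have hj' := h j (Finset.mem_insert_self _ _)
      rw [c.rowSum_pivotConfig_self hi hj hT, left_eq_add, div_eq_zero_iff] at hj'
      exact sub_eq_zero.1 (hj'.resolve_right hT)
    intro r hr
    by_cases hri : r = i
    · exact hri ▸ hβi
    · rw [h r (Finset.mem_insert_of_mem (Finset.mem_erase.2 ⟨hri, hr⟩)),
        c.rowSum_pivotConfig_of_ne hi hj hT (hne hr), ← hβi, sub_self, mul_zero, add_zero]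
  · intro h r hr
    have hβi : β i - c.rowSum i β = 0 := sub_eq_zero.2 (h i hi)
    rcases Finset.mem_insert.1 hr with rfl | hr
    · rw [c.rowSum_pivotConfig_self hi hj hT, hβi, zero_div, add_zero]
    · have hrb := (Finset.mem_erase.1 hr).2
      rw [c.rowSum_pivotConfig_of_ne hi hj hT (hne hrb), hβi, mul_zero, add_zero]
      exact h r hrb

lemma rowSum_updateConfig (c : Config V) {j : V} (hj : j ∉ c.basic) (δ : ℝ) (r : V) :
    c.rowSum r (c.updateConfig j δ).α = c.rowSum r c.α + δ * c.T r j := by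
  have hdiff : ∀ k ∈ c.nonbasic, c.T r k * (c.updateConfig j δ).α k - c.T r k * c.α k
      = if k = j then δ * c.T r j else 0 := by
    intro k hk
    have hkb : k ∉ c.basic := mem_nonbasic.1 hk
    by_cases hkj : k = j
    · subst hkj
      simp only [updateConfig, if_true]
      ring
    · simp [updateConfig, hkj, hkb]
  rw [← sub_eq_iff_eq_add', rowSum, rowSum, ← nonbasic, ← Finset.sum_sub_distrib,
    Finset.sum_congr rfl hdiff, Finset.sum_ite_eq' _ _ _, if_pos (mem_nonbasic.2 hj)]

theorem satTab_updateConfig (c : Config V) {j : V} (hj : j ∉ c.basic) (δ : ℝ)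
    (h : c.SatTab c.α) : (c.updateConfig j δ).SatTab (c.updateConfig j δ).α := by
  intro r hr
  have hrj : r ≠ j := fun e => hj (e ▸ hr)
  change _ = c.rowSum r _
  rw [c.rowSum_updateConfig hj, ← h r hr]
  simp only [updateConfig, if_neg hrj, if_pos (show r ∈ c.basic from hr)]

end Config

namespace Step

variable {V : Type*} [Fintype V] [DecidableEq V]

lemma child_cases {c c' : Config V} {ts : List (RConfig V)} (h : Step c ts)
    (hc' : RConfig.node c' ∈ ts) :
    (∃ i j, i ∈ c.basic ∧ j ∉ c.basic ∧ c.T i j ≠ 0 ∧ c' = c.pivotConfig i j) ∨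
    (∃ j δ, j ∉ c.basic ∧ c' = c.updateConfig j δ) ∨
    (c'.basic = c.basic ∧ c'.T = c.T ∧ c'.α = c.α) := by
  cases h with
  | pivot1 i j hi _ hj =>
    obtain ⟨hj, hT⟩ := Config.notMem_basic_and_T_ne_zero_of_mem_slackPos hj
    exact .inl ⟨i, j, hi, hj, hT, by simpa using hc'⟩
  | pivot2 i j hi _ hj =>
    obtain ⟨hj, hT⟩ := Config.notMem_basic_and_T_ne_zero_of_mem_slackNeg hj
    exact .inl ⟨i, j, hi, hj, hT, by simpa using hc'⟩
  | pivotForRelu i j hi _ hj hT => exact .inl ⟨i, j, hi, hj, hT, by simpa using hc'⟩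
  | update j δ hj => exact .inr (.inl ⟨j, δ, hj, by simpa using hc'⟩)
  | updateB i j _ hi => exact .inr (.inl ⟨i, _, hi, by simpa using hc'⟩)
  | updateF i j _ hj => exact .inr (.inl ⟨j, _, hj, by simpa using hc'⟩)
  | reluSplit =>
    simp only [List.mem_cons, List.not_mem_nil, or_false, RConfig.node.injEq] at hc'
    rcases hc' with rfl | rfl <;> exact .inr (.inr ⟨rfl, rfl, rfl⟩)
  | deriveLowerBound | deriveUpperBound =>
    obtain rfl := by simpa using hc'
    exact .inr (.inr ⟨rfl, rfl, rfl⟩)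
  | failure | reluSuccess => simp at hc'

theorem satTab_iff {c c' : Config V} {ts : List (RConfig V)} (h : Step c ts)
    (hc' : RConfig.node c' ∈ ts) (β : V → ℝ) : c'.SatTab β ↔ c.SatTab β := by
  rcases h.child_cases hc' with ⟨i, j, hi, hj, hT, rfl⟩ | ⟨j, δ, hj, rfl⟩ | ⟨hB, hT, -⟩
  · exact c.satTab_pivotConfig_iff hi hj hT β
  · exact Iff.rfl
  · rw [Config.satTab_congr hB hT]

theorem satTab_α {c c' : Config V} {ts : List (RConfig V)} (h : Step c ts)
    (hc' : RConfig.node c' ∈ ts) (hα : c.SatTab c.α) : c'.SatTab c'.α := by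
  rcases h.child_cases hc' with ⟨i, j, hi, hj, hT, rfl⟩ | ⟨j, δ, hj, rfl⟩ | ⟨hB, hT, hα'⟩
  · exact (c.satTab_pivotConfig_iff hi hj hT c.α).2 hα
  · exact c.satTab_updateConfig hj δ hα
  · rwa [Config.satTab_congr hB hT, hα']

end Step

namespace Expand

variable {V : Type*} [Fintype V] [DecidableEq V]

lemma mem_cases {t t' : DTree V} (h : Expand t t') {s : RConfig V} (hs : DTree.Mem s t') :
    DTree.Mem s t ∨ ∃ c ts, DTree.Mem (RConfig.node c) t ∧ Step c ts ∧ s ∈ ts := by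
  induction h generalizing s with
  | @here c ts hstep =>
    cases hs with
    | root => exact .inl (.leaf _)
    | child hm hts =>
      obtain ⟨r, hr, rfl⟩ := List.mem_map.1 hts
      cases hm
      exact .inr ⟨c, ts, .leaf _, hstep, hr⟩
  | @child s₀ pre post t t' _ ih =>
    cases hs with
    | root => exact .inl (.root _ _)
    | child hm hu =>
      rcases List.mem_append.1 hu with hu | hu
      · exact .inl (.child hm (List.mem_append_left _ hu))
      rcases List.mem_cons.1 hu with rfl | hu
      · have ht : t ∈ pre ++ t :: post := List.mem_append_right _ List.mem_cons_self
        rcases ih hm with hm | ⟨c, ts, hc, hstep, hs⟩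
        exacts [.inl (.child hm ht), .inr ⟨c, ts, .child hc ht, hstep, hs⟩]
      · exact .inl (.child hm (List.mem_append_right _ (List.mem_cons_of_mem _ hu)))

end Expand

theorem IsDerivation.forall_mem {V : Type*} [Fintype V] [DecidableEq V] {P : Config V → Prop}
    {s0 : Config V} {m : ℕ} {D : ℕ → DTree V} (hD : IsDerivation s0 m D) (h0 : P s0)
    (hstep : ∀ c c' ts, Step c ts → RConfig.node c' ∈ ts → P c → P c')
    {n : ℕ} (hn : n ≤ m) {c : Config V} (hc : DTree.Mem (RConfig.node c) (D n)) : P c := by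
  induction n generalizing c with
  | zero =>
    rw [hD.1] at hc
    cases hc
    exact h0
  | succ n ih =>
    rcases (hD.2 n hn).mem_cases hc with hc | ⟨c₀, ts, hc₀, hs, hc'⟩
    exacts [ih (by omega) hc, hstep c₀ c ts hs hc' (ih (by omega) hc₀)]

/-- Lemma 1 of the Reluplex paper. Let `D` be a derivation starting
from the single-node tree with configuration `s0 = ⟨B₀, T₀, l₀, u₀, α₀, R₀⟩`, where
`α₀ ≡ 0`. Then for every derivation tree `D i` appearing in the derivation and every
non-distinguished node `⟨B, T, l, u, α, R⟩` appearing in `D i`: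
(i) an assignment satisfies `T₀` iff it satisfies `T`; and
(ii) the assignment `α` satisfies `T`. -/
theorem reluplex_tableau_invariant {V : Type*} [Fintype V] [DecidableEq V]
    (s0 : Config V) (hα0 : s0.α = fun _ => 0)
    (m : ℕ) (D : ℕ → DTree V) (hD : IsDerivation s0 m D)
    (i : ℕ) (hi : i ≤ m) (c : Config V) (hc : DTree.Mem (RConfig.node c) (D i)) :
    (∀ β : V → ℝ, s0.SatTab β ↔ c.SatTab β) ∧ c.SatTab c.α := by
  have hs0 : s0.SatTab s0.α := fun r _ => by simp [hα0, Config.rowSum]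
  refine hD.forall_mem (P := fun c => (∀ β, s0.SatTab β ↔ c.SatTab β) ∧ c.SatTab c.α)
    ⟨fun _ => Iff.rfl, hs0⟩ ?_ hi hc
  rintro c c' ts hstep hc' ⟨hiff, hα⟩
  exact ⟨fun β => (hiff β).trans (hstep.satTab_iff hc' β).symm, hstep.satTab_α hc' hα⟩
end

section
/- The update operation preserves satisfaction of the tableau equations: let B be the set of basic variables of a tableau T with coefficients T_{i,j}, let α be a real-valued assignment satisfying every equation x_i = Σ_{x_k non-basic} T_{i,k}·α(x_k) of T, let x_j be a non-basic variable and δ ∈ ℝ. Define α′ by α′(x_j) = α(x_j) + δ, α′(x_i) = α(x_i) + δ·T_{i,j} for every basic variable x_i, and α′(x_k) = α(x_k) for every other non-basic variable x_k. Then α′ also satisfies every equation of T. -/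
open scoped Classical

/-- A simplex tableau configuration over the variable set `V`: a set of basic
variables and, for each basic variable `i`, the row of coefficients expressing it
as a linear combination `x_i = Σ_{j ∉ basic} T i j * x_j` of non-basic variables. -/
structure Tableau (V : Type*) where
  basic : Finset V
  T : V → V → ℝ

namespace Tableau

variable {V : Type*} [Fintype V] [DecidableEq V]

/-- The right-hand side `Σ_{j ∉ basic} T i j * β j` of the tableau row of `i`. -/
noncomputable def rowSum (c : Tableau V) (i : V) (β : V → ℝ) : ℝ :=
  ∑ j ∈ Finset.univ.filter (fun j => j ∉ c.basic), c.T i j * β j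

/-- An assignment `β` satisfies every equation of the tableau. -/
def SatTab (c : Tableau V) (β : V → ℝ) : Prop :=
  ∀ i ∈ c.basic, β i = c.rowSum i β

/-- The `pivot(T,i,j)` operation: `x_i` leaves the basis and `x_j` enters it;
the row of `x_i` is solved for `x_j`, and the result is substituted for `x_j`
in all other rows. -/
noncomputable def pivot (c : Tableau V) (i j : V) : Tableau V :=
  { basic := insert j (c.basic.erase i)
    T := fun r k =>
      if r = j then (if k = i then 1 / c.T i j else - (c.T i k / c.T i j))
      else (if k = i then c.T r j / c.T i j
            else c.T r k - c.T r j * c.T i k / c.T i j) }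

end Tableau

/-- The update operation preserves satisfaction of the tableau
equations: if the assignment `α` satisfies every equation of the tableau, `x_j` is
non-basic and `δ ∈ ℝ`, then the assignment `α'` with `α'(x_j) = α(x_j) + δ`,
`α'(x_i) = α(x_i) + δ * T i j` for basic `x_i`, and `α'` unchanged elsewhere, also
satisfies every equation of the tableau. -/
theorem update_preserves_satTab {V : Type*} [Fintype V] [DecidableEq V]
    (c : Tableau V) (α : V → ℝ) (hα : c.SatTab α) (j : V) (hj : j ∉ c.basic) (δ : ℝ) :
    c.SatTab (fun k =>
      if k = j then α k + δ
      else if k ∈ c.basic then α k + δ * c.T k j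
      else α k) := by
  intro i hi
  have hij : i ≠ j := fun h => hj (h ▸ hi)
  simp only [if_neg hij, if_pos hi]
  rw [hα i hi]
  unfold Tableau.rowSum
  have key : ∀ k ∈ Finset.univ.filter (fun k => k ∉ c.basic),
      c.T i k * ((fun k => if k = j then α k + δ
        else if k ∈ c.basic then α k + δ * c.T k j else α k) k)
      = c.T i k * α k + (if k = j then c.T i j * δ else 0) := by
    intro k hk
    simp only [Finset.mem_filter] at hk
    by_cases h : k = j
    · subst h; simp [mul_add]
    · simp [h, hk.2]
  rw [Finset.sum_congr rfl key, Finset.sum_add_distrib, Finset.sum_ite_eq' _ j]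
  simp [hj, mul_comm]
end

section
/- Soundness of the Failure rule (lower-bound case): let J be a finite index set, c : J → ℝ, l, u : J → ℝ bounds, and let α, α* : J → ℝ with corresponding values y = Σ_{j ∈ J} c_j·α(j) and y* = Σ_{j ∈ J} c_j·α*(j). If y < y* and l(j) ≤ α*(j) ≤ u(j) for all j ∈ J, then there exists k ∈ J such that (c_k > 0 and α(k) < u(k)) or (c_k < 0 and α(k) > l(k)). In particular, if a basic variable x_i of a tableau satisfies α(x_i) < l(x_i) under the current assignment α, and some assignment α* satisfies the tableau row of x_i together with all variable bounds, then slack⁺(x_i) is nonempty. -/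
/-- soundness of the `Failure` rule, lower-bound case. Let
`y = Σ_j c j * α j` and `y* = Σ_j c j * α* j`. If `y < y*` and
`l j ≤ α* j ≤ u j` for all `j`, then there is some `k` with
`(c k > 0 ∧ α k < u k)` or `(c k < 0 ∧ l k < α k)`; i.e. `slack⁺` is nonempty. -/
theorem failure_rule_sound_lower {J : Type*} [Fintype J]
    (c l u α αstar : J → ℝ)
    (h : ∑ j, c j * α j < ∑ j, c j * αstar j)
    (hb : ∀ j, l j ≤ αstar j ∧ αstar j ≤ u j) :
    ∃ k, (0 < c k ∧ α k < u k) ∨ (c k < 0 ∧ l k < α k) := by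
  by_contra hc
  push_neg at hc
  refine absurd (Finset.sum_le_sum fun j _ => ?_) (not_le.mpr h)
  obtain ⟨h1, h2⟩ := hc j
  rcases lt_trichotomy (c j) 0 with hj | hj | hj
  · have : α j ≤ αstar j := (h2 hj).trans (hb j).1
    exact mul_le_mul_of_nonpos_left this hj.le
  · simp [hj]
  · have : αstar j ≤ α j := (hb j).2.trans (h1 hj)
    exact mul_le_mul_of_nonneg_left this hj.le
end

section
/- Soundness of the Failure rule (upper-bound case): let J be a finite index set, c : J → ℝ, l, u : J → ℝ bounds, and let α, α* : J → ℝ with corresponding values y = Σ_{j ∈ J} c_j·α(j) and y* = Σ_{j ∈ J} c_j·α*(j). If y > y* and l(j) ≤ α*(j) ≤ u(j) for all j ∈ J, then there exists k ∈ J such that (c_k < 0 and α(k) < u(k)) or (c_k > 0 and α(k) > l(k)). In particular, if a basic variable x_i of a tableau satisfies α(x_i) > u(x_i) under the current assignment α, and some assignment α* satisfies the tableau row of x_i together with all variable bounds, then slack⁻(x_i) is nonempty. -/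
/-- soundness of the `Failure` rule, upper-bound case. Let
`y = Σ_j c j * α j` and `y* = Σ_j c j * α* j`. If `y > y*` and
`l j ≤ α* j ≤ u j` for all `j`, then there is some `k` with
`(c k < 0 ∧ α k < u k)` or `(c k > 0 ∧ l k < α k)`; i.e. `slack⁻` is nonempty. -/
theorem failure_rule_sound_upper {J : Type*} [Fintype J]
    (c l u α αstar : J → ℝ)
    (h : ∑ j, c j * αstar j < ∑ j, c j * α j)
    (hb : ∀ j, l j ≤ αstar j ∧ αstar j ≤ u j) :
    ∃ k, (c k < 0 ∧ α k < u k) ∨ (0 < c k ∧ l k < α k) := by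
  by_contra hc
  push_neg at hc
  have : ∑ j, c j * α j ≤ ∑ j, c j * αstar j := by
    apply Finset.sum_le_sum
    intro j _
    obtain ⟨h1, h2⟩ := hc j
    rcases lt_trichotomy (c j) 0 with hn | hz | hp
    · have : u j ≤ α j := h1 hn
      nlinarith [(hb j).2]
    · simp [hz]
    · have : α j ≤ l j := h2 hp
      nlinarith [(hb j).1]
  linarith
end

section
/- Correctness of the discrete 3-SAT reduction: let ψ = C_1 ∧ ⋯ ∧ C_n be a 3-CNF formula over Boolean variables x_1, …, x_k, where each clause C_i is a disjunction of three literals. For a real vector x : Fin k → ℝ, encode a positive literal on variable x_j as the value x_j and a negative literal as 1 − x_j, and let y_i(x) = 1 − max(0, 1 − (q_i^1(x) + q_i^2(x) + q_i^3(x))) where q_i^1, q_i^2, q_i^3 are the encoded values of the three literals of C_i. Then ψ is satisfiable (by a Boolean assignment) if and only if there exists x : Fin k → ℝ with x_j ∈ {0, 1} for all j and Σ_{i=1}^{n} y_i(x) = n. -/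
open scoped Classical

/-- A literal over the Boolean variables `x_1, …, x_k`: a variable together with a
polarity (`neg = true` for a negated variable). -/
structure Lit (k : ℕ) where
  var : Fin k
  neg : Bool

/-- The Boolean value of a literal under a Boolean assignment. -/
def Lit.evalB {k : ℕ} (L : Lit k) (a : Fin k → Bool) : Bool :=
  if L.neg then !(a L.var) else a L.var

/-- The real encoding of a literal: a positive literal on `x_j` is encoded as the
value `x j`, and a negative literal as `1 - x j` (the negation gadget). -/
def Lit.evalR {k : ℕ} (L : Lit k) (x : Fin k → ℝ) : ℝ :=
  if L.neg then 1 - x L.var else x L.var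

/-- A 3-SAT clause: a disjunction of three literals. -/
structure Clause3 (k : ℕ) where
  l1 : Lit k
  l2 : Lit k
  l3 : Lit k

/-- A Boolean assignment satisfies a clause iff some literal of the clause is true. -/
def Clause3.HoldsB {k : ℕ} (C : Clause3 k) (a : Fin k → Bool) : Prop :=
  C.l1.evalB a = true ∨ C.l2.evalB a = true ∨ C.l3.evalB a = true

/-- The disjunction gadget of a clause: `y = 1 - max 0 (1 - (q₁ + q₂ + q₃))`, where
`q₁, q₂, q₃` are the real encodings of the three literals; it uses one ReLU node. -/
noncomputable def Clause3.gadget {k : ℕ} (C : Clause3 k) (x : Fin k → ℝ) : ℝ :=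
  1 - max 0 (1 - (C.l1.evalR x + C.l2.evalR x + C.l3.evalR x))

lemma lit_evalR_of_bool {k : ℕ} (L : Lit k) (a : Fin k → Bool) :
    L.evalR (fun j => if a j then 1 else 0) = if L.evalB a then 1 else 0 := by
  unfold Lit.evalR Lit.evalB
  cases hn : L.neg <;> cases hv : a L.var <;> simp [hn, hv]

lemma gadget_eq_one_iff {k : ℕ} (C : Clause3 k) (a : Fin k → Bool) :
    C.gadget (fun j => if a j then 1 else 0) = 1 ↔ C.HoldsB a := by
  unfold Clause3.gadget Clause3.HoldsB
  rw [lit_evalR_of_bool, lit_evalR_of_bool, lit_evalR_of_bool]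
  cases h1 : C.l1.evalB a <;> cases h2 : C.l2.evalB a <;> cases h3 : C.l3.evalB a <;>
    simp <;> norm_num

lemma gadget_le_one {k : ℕ} (C : Clause3 k) (x : Fin k → ℝ) : C.gadget x ≤ 1 := by
  unfold Clause3.gadget
  have := le_max_left 0 (1 - (C.l1.evalR x + C.l2.evalR x + C.l3.evalR x))
  linarith

lemma sum_gadget_eq_iff {k n : ℕ} (ψ : Fin n → Clause3 k) (x : Fin k → ℝ) :
    ∑ i, (ψ i).gadget x = (n : ℝ) ↔ ∀ i, (ψ i).gadget x = 1 := by
  have h : ∑ i, (1 - (ψ i).gadget x) = (n : ℝ) - ∑ i, (ψ i).gadget x := by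
    rw [Finset.sum_sub_distrib]; simp
  constructor
  · intro hs i
    have h0 : ∑ i ∈ Finset.univ, (1 - (ψ i).gadget x) = 0 := by rw [h, hs]; ring
    have := (Finset.sum_eq_zero_iff_of_nonneg
      (fun i _ => by linarith [gadget_le_one (ψ i) x])).mp h0 i (Finset.mem_univ i)
    linarith
  · intro hone
    simp [hone]

/-- correctness of the discrete 3-SAT reduction. A 3-CNF formula
`ψ = C_1 ∧ ⋯ ∧ C_n` over Boolean variables `x_1, …, x_k` is satisfiable by a Boolean
assignment iff there is a real vector `x : Fin k → ℝ` with every `x j ∈ {0, 1}` such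
that the sum of the clause-gadget outputs equals `n`. -/
theorem discrete_threeSat_reduction_correct (k n : ℕ) (ψ : Fin n → Clause3 k) :
    (∃ a : Fin k → Bool, ∀ i, (ψ i).HoldsB a) ↔
      ∃ x : Fin k → ℝ, (∀ j, x j = 0 ∨ x j = 1) ∧
        ∑ i, (ψ i).gadget x = (n : ℝ) := by
  constructor
  · rintro ⟨a, ha⟩
    refine ⟨fun j => if a j then 1 else 0, fun j => by by_cases h : a j <;> simp [h], ?_⟩
    rw [sum_gadget_eq_iff]
    exact fun i => (gadget_eq_one_iff (ψ i) a).mpr (ha i)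
  · rintro ⟨x, hx, hs⟩
    refine ⟨fun j => decide (x j = 1), fun i => ?_⟩
    have hx' : x = fun j => if decide (x j = 1) then (1:ℝ) else 0 := by
      funext j
      rcases hx j with h | h <;> simp [h]
    rw [hx'] at hs
    rw [sum_gadget_eq_iff] at hs
    exact (gadget_eq_one_iff (ψ i) _).mp (hs i)
end

section
/- Correctness of the continuous 3-SAT reduction: let ψ = C_1 ∧ ⋯ ∧ C_n be a 3-CNF formula over Boolean variables x_1, …, x_k and let 0 < ε < 1/(n + 3). For a real vector x : Fin k → ℝ, encode a positive literal on variable x_j as x_j and a negative literal as 1 − x_j, and let y_i(x) = 1 − max(0, 1 − (q_i^1(x) + q_i^2(x) + q_i^3(x))) where q_i^1, q_i^2, q_i^3 are the encoded values of the three literals of clause C_i. Then ψ is satisfiable (by a Boolean assignment) if and only if there exists x : Fin k → ℝ such that x_j ∈ [0, ε] ∪ [1 − ε, 1] for every j and Σ_{i=1}^{n} y_i(x) ∈ [n(1 − ε), n]. Moreover, from any such x, the Boolean assignment sending x_j to true iff x_j ≥ 1 − ε satisfies ψ. -/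
open scoped Classical

/-- correctness of the continuous 3-SAT reduction. Let
`ψ = C_1 ∧ ⋯ ∧ C_n` be a 3-CNF formula over `x_1, …, x_k` and `0 < ε < 1/(n+3)`.
Then `ψ` is satisfiable by a Boolean assignment iff there is an `x : Fin k → ℝ` with
every `x j ∈ [0, ε] ∪ [1-ε, 1]` and `Σ i, y_i(x) ∈ [n(1-ε), n]`, where `y_i` is the
clause gadget. Moreover, from any such `x`, the Boolean assignment sending `x_j` to
true iff `x j ≥ 1 - ε` satisfies `ψ`. -/
theorem continuous_threeSat_reduction_correct (k n : ℕ) (ψ : Fin n → Clause3 k)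
    (ε : ℝ) (hε0 : 0 < ε) (hε : ε < 1 / (n + 3)) :
    ((∃ a : Fin k → Bool, ∀ i, (ψ i).HoldsB a) ↔
      ∃ x : Fin k → ℝ,
        (∀ j, x j ∈ Set.Icc 0 ε ∪ Set.Icc (1 - ε) 1) ∧
        (∑ i, (ψ i).gadget x) ∈ Set.Icc ((n : ℝ) * (1 - ε)) (n : ℝ)) ∧
    (∀ x : Fin k → ℝ,
      (∀ j, x j ∈ Set.Icc 0 ε ∪ Set.Icc (1 - ε) 1) →
      (∑ i, (ψ i).gadget x) ∈ Set.Icc ((n : ℝ) * (1 - ε)) (n : ℝ) →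
      ∀ i, (ψ i).HoldsB (fun j => decide (1 - ε ≤ x j))) := by
  have hnε : ((n : ℝ) + 3) * ε < 1 := by
    have h3 : (0:ℝ) < (n:ℝ) + 3 := by positivity
    rw [lt_div_iff₀ h3] at hε
    linarith
  have key : ∀ x : Fin k → ℝ,
      (∀ j, x j ∈ Set.Icc 0 ε ∪ Set.Icc (1 - ε) 1) →
      (∑ i, (ψ i).gadget x) ∈ Set.Icc ((n : ℝ) * (1 - ε)) (n : ℝ) →
      ∀ i, (ψ i).HoldsB (fun j => decide (1 - ε ≤ x j)) := by
    intro x hx hsum i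
    set a : Fin k → Bool := fun j => decide (1 - ε ≤ x j) with ha
    have hle1 : ∀ j : Fin n, (ψ j).gadget x ≤ 1 := by
      intro j
      unfold Clause3.gadget
      have := le_max_left (0:ℝ)
        (1 - ((ψ j).l1.evalR x + (ψ j).l2.evalR x + (ψ j).l3.evalR x))
      linarith
    -- lower bound for the i-th gadget
    have hrest : ∑ j ∈ Finset.univ.erase i, (ψ j).gadget x ≤ ((n:ℝ) - 1) := by
      calc ∑ j ∈ Finset.univ.erase i, (ψ j).gadget x
          ≤ ∑ j ∈ Finset.univ.erase i, (1:ℝ) :=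
            Finset.sum_le_sum fun j _ => hle1 j
        _ = ((n:ℝ) - 1) := by
            rw [Finset.sum_const, Finset.card_erase_of_mem (Finset.mem_univ i)]
            simp [Finset.card_univ]
            have : 1 ≤ n := Nat.one_le_iff_ne_zero.mpr (by
              rintro rfl; exact absurd i.2 (by simp))
            push_cast [Nat.cast_sub this]
            ring
    have hsplit : (∑ j, (ψ j).gadget x)
        = (ψ i).gadget x + ∑ j ∈ Finset.univ.erase i, (ψ j).gadget x :=
      (Finset.add_sum_erase _ _ (Finset.mem_univ i)).symm
    have hgi : 1 - (n:ℝ) * ε ≤ (ψ i).gadget x := by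
      have h1 := hsum.1
      rw [hsplit] at h1
      nlinarith
    have hS : 1 - (n:ℝ) * ε ≤ (ψ i).l1.evalR x + (ψ i).l2.evalR x + (ψ i).l3.evalR x := by
      unfold Clause3.gadget at hgi
      have := le_max_right (0:ℝ)
        (1 - ((ψ i).l1.evalR x + (ψ i).l2.evalR x + (ψ i).l3.evalR x))
      by_cases hc : (0:ℝ) ≤ 1 - ((ψ i).l1.evalR x + (ψ i).l2.evalR x + (ψ i).l3.evalR x)
      · rw [max_eq_right hc] at hgi; linarith
      · push_neg at hc; linarith
    have hlit : ∀ L : Lit k, L.evalB a = false → L.evalR x ≤ ε := by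
      intro L hL
      unfold Lit.evalB at hL
      unfold Lit.evalR
      cases hneg : L.neg with
      | true =>
        simp only [hneg, if_true] at hL ⊢
        have : a L.var = true := by
          cases h : a L.var
          · rw [h] at hL; simp at hL
          · rfl
        rw [ha] at this
        simp only [decide_eq_true_eq] at this
        linarith
      | false =>
        simp only [hneg, Bool.false_eq_true, if_false] at hL ⊢
        rw [ha] at hL
        simp only [decide_eq_false_iff_not, not_le] at hL
        rcases hx L.var with h | h
        · exact h.2
        · linarith [h.1]
    by_contra hcon
    unfold Clause3.HoldsB at hcon
    push_neg at hcon
    obtain ⟨h1, h2, h3⟩ := hcon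
    have e1 := hlit _ (Bool.eq_false_iff.mpr h1)
    have e2 := hlit _ (Bool.eq_false_iff.mpr h2)
    have e3 := hlit _ (Bool.eq_false_iff.mpr h3)
    have hn0 : (0:ℝ) ≤ (n:ℝ) := Nat.cast_nonneg n
    nlinarith
  constructor
  · constructor
    · rintro ⟨a, hA⟩
      refine ⟨fun j => if a j then 1 else 0, ?_, ?_⟩
      · intro j
        by_cases h : a j
        · right; simp only [h, if_true]
          exact Set.mem_Icc.mpr ⟨by linarith, le_refl 1⟩
        · left; simp only [h, if_false]
          exact Set.mem_Icc.mpr ⟨le_refl 0, le_of_lt hε0⟩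
      · set x : Fin k → ℝ := fun j => if a j then 1 else 0 with hxdef
        have hlit0 : ∀ L : Lit k, 0 ≤ L.evalR x := by
          intro L
          unfold Lit.evalR
          by_cases hn : L.neg <;> by_cases h : a L.var <;>
            simp [hn, h, hxdef]
        have hlit1 : ∀ L : Lit k, L.evalB a = true → L.evalR x = 1 := by
          intro L hL
          unfold Lit.evalB at hL
          unfold Lit.evalR
          cases hn : L.neg with
          | true =>
            simp only [hn, if_true] at hL ⊢
            have : a L.var = false := by
              cases h : a L.var
              · rfl
              · rw [h] at hL; simp at hL
            simp [hxdef, this]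
          | false =>
            simp only [hn, Bool.false_eq_true, if_false] at hL ⊢
            simp [hxdef, hL]
        have hg : ∀ i, (ψ i).gadget x = 1 := by
          intro i
          unfold Clause3.gadget
          have hS : 1 ≤ (ψ i).l1.evalR x + (ψ i).l2.evalR x + (ψ i).l3.evalR x := by
            rcases hA i with h | h | h
            · have := hlit1 _ h
              linarith [hlit0 (ψ i).l2, hlit0 (ψ i).l3]
            · have := hlit1 _ h
              linarith [hlit0 (ψ i).l1, hlit0 (ψ i).l3]
            · have := hlit1 _ h
              linarith [hlit0 (ψ i).l1, hlit0 (ψ i).l2]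
          rw [max_eq_left (by linarith)]
          ring
        rw [Finset.sum_congr rfl fun i _ => hg i, Finset.sum_const,
          Finset.card_univ, Fintype.card_fin]
        constructor
        · simp only [nsmul_eq_mul, mul_one]
          nlinarith [Nat.cast_nonneg (α := ℝ) n]
        · simp
    · rintro ⟨x, hx, hsum⟩
      exact ⟨_, key x hx hsum⟩
  · exact key
end
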